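/- arXiv:1905.06661 — 4 statements merged into one kernel-verified Lean document; each statement's English description precedes it below -/
import Mathlib

section
/- Suppose 1 > p > q > 0. Let t = (1/2)·log(p(1-q)/(q(1-p))). Then (p-q)(1+p-q)/(2(1-q)p) < t < (p-q)(1-p+q)/(2(1-p)q). -/
/-!
Write `t = ½ (log (p / q) + log ((1 - q) / (1 - p)))` and bound each logarithm on both sides
by `1 - 1 / x < log x < x - 1` (for `x ≠ 1`). Summing the two lower bounds
`(p - q) / p` and `(p - q) / (1 - q)`, resp. the two upper bounds `(p - q) / q` and
`(p - q) / (1 - p)`, gives exactly the two stated fractions.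
-/

namespace Real

variable {a b : ℝ}

lemma log_div_lt_sub_div (ha : 0 < a) (hb : 0 < b) (hab : a ≠ b) :
    log (b / a) < (b - a) / a := by
  calc log (b / a) < b / a - 1 :=
        log_lt_sub_one_of_pos (by positivity) (by rwa [Ne, div_eq_one_iff_eq ha.ne', eq_comm])
    _ = (b - a) / a := by field_simp

lemma sub_div_lt_log_div (ha : 0 < a) (hb : 0 < b) (hab : a ≠ b) :
    (b - a) / b < log (b / a) := by
  have h := log_div_lt_sub_div hb ha hab.symm
  rw [← inv_div, log_inv, ← neg_sub, neg_div] at h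
  linarith

end Real

theorem t_bounds (p q : ℝ) (hq : 0 < q) (hpq : q < p) (hp : p < 1) :
    (p - q) * (1 + p - q) / (2 * (1 - q) * p)
      < (1 / 2) * Real.log (p * (1 - q) / (q * (1 - p))) ∧
    (1 / 2) * Real.log (p * (1 - q) / (q * (1 - p)))
      < (p - q) * (1 - p + q) / (2 * (1 - p) * q) := by
  have hp0 : 0 < p := hq.trans hpq
  have h1p : 0 < 1 - p := by linarith
  have h1q : 0 < 1 - q := by linarith
  have hne : 1 - p ≠ 1 - q := by linarith
  rw [mul_div_mul_comm p (1 - q), Real.log_mul (by positivity) (by positivity)]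
  have lower : (p - q) * (1 + p - q) / (2 * (1 - q) * p)
      = (1 / 2) * ((p - q) / p + ((1 - q) - (1 - p)) / (1 - q)) := by field_simp; ring
  have upper : (p - q) * (1 - p + q) / (2 * (1 - p) * q)
      = (1 / 2) * ((p - q) / q + ((1 - q) - (1 - p)) / (1 - p)) := by field_simp; ring
  rw [lower, upper]
  constructor
  · linarith [Real.sub_div_lt_log_div hq hp0 hpq.ne, Real.sub_div_lt_log_div h1p h1q hne]
  · linarith [Real.log_div_lt_sub_div hq hp0 hpq.ne, Real.log_div_lt_sub_div h1p h1q hne]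
end

section
/- Suppose 1 > p > q > 0. Let λ = log((1-q)/(1-p)) / (log(p/q) + log((1-q)/(1-p))). Then q < λ < p. -/
/-!
Write `A = log (p / q)` and `L = log ((1 - q) / (1 - p))`, both positive. The two bounds
`q < L / (A + L) < p` amount to `q A < (1 - q) L` and `(1 - p) L < p A`, and the tangent line
bound `log x < x - 1` separates each pair by `p - q`:
`q A < p - q < (1 - q) L` and `(1 - p) L < p - q < p A`.
-/

namespace Real

theorem mul_log_div_lt_sub {a b : ℝ} (ha : 0 < a) (hb : 0 < b) (hab : a ≠ b) :
    a * log (b / a) < b - a := by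
  have hlog : log (b / a) < b / a - 1 :=
    log_lt_sub_one_of_pos (div_pos hb ha) (by rwa [ne_eq, div_eq_one_iff_eq ha.ne', eq_comm])
  calc a * log (b / a) < a * (b / a - 1) := mul_lt_mul_of_pos_left hlog ha
    _ = b - a := by field_simp

theorem sub_lt_mul_log_div {a b : ℝ} (ha : 0 < a) (hb : 0 < b) (hab : a ≠ b) :
    b - a < b * log (b / a) := by
  have h := mul_log_div_lt_sub hb ha hab.symm
  rw [← inv_div, log_inv] at h
  linarith

end Real

open Real in
theorem lambda_bounds (p q : ℝ) (hq : 0 < q) (hpq : q < p) (hp : p < 1) :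
    q < Real.log ((1 - q) / (1 - p)) /
        (Real.log (p / q) + Real.log ((1 - q) / (1 - p))) ∧
    Real.log ((1 - q) / (1 - p)) /
        (Real.log (p / q) + Real.log ((1 - q) / (1 - p))) < p := by
  have hp0 : 0 < p := hq.trans hpq
  have hp1 : 0 < 1 - p := by linarith
  have hq1 : 0 < 1 - q := by linarith
  set A := log (p / q)
  set L := log ((1 - q) / (1 - p))
  have hA : 0 < A := log_pos ((one_lt_div hq).mpr hpq)
  have hL : 0 < L := log_pos ((one_lt_div hp1).mpr (by linarith))
  have h₁ : q * A < p - q := mul_log_div_lt_sub hq hp0 hpq.ne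
  have h₂ : (1 - p) * L < p - q := by
    simpa using mul_log_div_lt_sub hp1 hq1 (by linarith : 1 - p ≠ 1 - q)
  have h₃ : p - q < p * A := sub_lt_mul_log_div hq hp0 hpq.ne
  have h₄ : p - q < (1 - q) * L := by
    simpa using sub_lt_mul_log_div hp1 hq1 (by linarith : 1 - p ≠ 1 - q)
  constructor
  · rw [lt_div_iff₀ (by positivity)]
    linarith
  · rw [div_lt_iff₀ (by positivity)]
    linarith
end

section
/- Suppose 0 < q < p < 1 and let λ = log((1-q)/(1-p)) / (log(p/q) + log((1-q)/(1-p))). Then λ ≥ (p - q) / (log(p/q) + (p - q)). -/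
/-!
With `A = log (p / q) > 0`, the map `x ↦ x / (A + x)` is increasing, so it suffices that
`log ((1 - q) / (1 - p)) ≥ p - q`. This follows from `log x ≥ 1 - 1 / x`, which gives
`log ((1 - q) / (1 - p)) ≥ (p - q) / (1 - q) ≥ p - q`.
-/

open Real

theorem div_add_self_le_div_add_self {a x y : ℝ} (ha : 0 ≤ a) (hax : 0 < a + x) (hxy : x ≤ y) :
    x / (a + x) ≤ y / (a + y) := by
  rw [div_le_div_iff₀ hax (by linarith)]
  nlinarith

theorem sub_div_one_sub_le_log_one_sub_div_one_sub {p q : ℝ} (hq : q < 1) (hp : p < 1) :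
    (p - q) / (1 - q) ≤ log ((1 - q) / (1 - p)) := by
  have h := one_sub_inv_le_log_of_pos (div_pos (sub_pos.2 hq) (sub_pos.2 hp))
  calc (p - q) / (1 - q) = 1 - ((1 - q) / (1 - p))⁻¹ := by
        field_simp [(sub_pos.2 hq).ne']
        ring
    _ ≤ log ((1 - q) / (1 - p)) := h

theorem sub_le_log_one_sub_div_one_sub {p q : ℝ} (hq : 0 ≤ q) (hqp : q ≤ p) (hp : p < 1) :
    p - q ≤ log ((1 - q) / (1 - p)) :=
  calc p - q ≤ (p - q) / (1 - q) :=
        le_div_self (sub_nonneg.2 hqp) (by linarith) (by linarith)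
    _ ≤ log ((1 - q) / (1 - p)) := sub_div_one_sub_le_log_one_sub_div_one_sub (by linarith) hp

theorem lambda_lower_bound (p q : ℝ) (hq : 0 < q) (hpq : q < p) (hp : p < 1) :
    Real.log ((1 - q) / (1 - p)) /
        (Real.log (p / q) + Real.log ((1 - q) / (1 - p)))
      ≥ (p - q) / (Real.log (p / q) + (p - q)) := by
  have hlog_pos : 0 < log (p / q) := log_pos ((one_lt_div hq).2 hpq)
  exact div_add_self_le_div_add_self hlog_pos.le (by linarith)
    (sub_le_log_one_sub_div_one_sub hq.le hpq.le hp)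
end

section
/- Let a ∈ (0,1) and ε₁, ε₂ ≥ 0, not both zero, with a + ε₁ < 1 and a - ε₂ > 0. Then λ := log((1-(a-ε₂))/(1-(a+ε₁))) / (log((a+ε₁)/(a-ε₂)) + log((1-(a-ε₂))/(1-(a+ε₁)))) satisfies a - ε₂ ≤ λ ≤ a + ε₁. -/
lemma log_ratio_bounds_aux {x y : ℝ} (hx : 0 < x) (hy : 0 < y) :
    y * Real.log (x / y) ≤ x - y ∧ x - y ≤ x * Real.log (x / y) := by
  have e1 := Real.log_le_sub_one_of_pos (div_pos hx hy)
  have e2 := Real.log_le_sub_one_of_pos (div_pos hy hx)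
  have hlog : Real.log (y / x) = - Real.log (x / y) := by
    rw [← Real.log_inv, inv_div]
  rw [hlog] at e2
  constructor
  · have c : y * (x / y - 1) = x - y := by field_simp
    nlinarith [mul_le_mul_of_nonneg_left e1 hy.le]
  · have c : x * (y / x - 1) = y - x := by field_simp
    nlinarith [mul_le_mul_of_nonneg_left e2 hx.le]

theorem lambda_perturbation_bounds (a ε₁ ε₂ : ℝ) (ha : 0 < a) (ha' : a < 1)
    (hε₁ : 0 ≤ ε₁) (hε₂ : 0 ≤ ε₂) (hne : 0 < ε₁ + ε₂)
    (hp : a + ε₁ < 1) (hq : 0 < a - ε₂) :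
    a - ε₂ ≤ Real.log ((1 - (a - ε₂)) / (1 - (a + ε₁))) /
        (Real.log ((a + ε₁) / (a - ε₂)) + Real.log ((1 - (a - ε₂)) / (1 - (a + ε₁)))) ∧
    Real.log ((1 - (a - ε₂)) / (1 - (a + ε₁))) /
        (Real.log ((a + ε₁) / (a - ε₂)) + Real.log ((1 - (a - ε₂)) / (1 - (a + ε₁))))
      ≤ a + ε₁ := by
  set p := a + ε₁ with hpdef
  set q := a - ε₂ with hqdef
  have hp0 : 0 < p := by simp only [hpdef]; linarith
  have hq1 : q < 1 := by simp only [hqdef]; linarith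
  have hqp : q < p := by simp only [hpdef, hqdef]; linarith
  have h1p : 0 < 1 - p := by linarith
  have h1q : 0 < 1 - q := by linarith
  obtain ⟨h1, h4⟩ := log_ratio_bounds_aux hp0 hq
  obtain ⟨h3, h2⟩ := log_ratio_bounds_aux h1q h1p
  set K := Real.log (p / q) with hKdef
  set L := Real.log ((1 - q) / (1 - p)) with hLdef
  have hK0 : 0 < K := Real.log_pos ((one_lt_div hq).mpr hqp)
  have hL0 : 0 < L := Real.log_pos ((one_lt_div h1p).mpr (by linarith))
  have hden : 0 < K + L := by linarith
  have simp2 : (1 - q) - (1 - p) = p - q := by ring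
  rw [simp2] at h3 h2
  constructor
  · rw [le_div_iff₀ hden]
    nlinarith
  · rw [div_le_iff₀ hden]
    nlinarith
end
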